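/- arXiv:1411.3838 — 4 statements merged into one kernel-verified Lean document; each statement's English description precedes it below -/
import Mathlib

section
/- Let X and Y be independent positive real-valued random variables such that log X is Gaussian with mean μ_l and variance σ_l² > 0 and log Y is Gaussian with mean μ_e and variance σ_e² > 0. Define the secrecy capacity C_s = max(log₂(1 + X) − log₂(1 + Y), 0). Then the probability of existence of non-zero secrecy capacity satisfies P[C_s > 0] = Q((μ_e − μ_l)/√(σ_l² + σ_e²)), where Q(x) = 1 − Φ(x) and Φ is the standard normal cumulative distribution function. -/
open MeasureTheory ProbabilityTheory Real Set

/-- The standard normal cumulative distribution function `Φ`. -/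
noncomputable def stdNormalCDF (x : ℝ) : ℝ :=
  ((gaussianReal 0 1) (Set.Iic x)).toReal

/-- The Gaussian Q-function: `Q(x) = 1 - Φ(x)`. -/
noncomputable def gaussQ (x : ℝ) : ℝ := 1 - stdNormalCDF x

/-!
Since `t ↦ log₂ (1 + t)` and `log` are strictly increasing on `(0, ∞)`, the secrecy capacity is
positive exactly when `log X - log Y > 0`. By independence, `log X - log Y` is Gaussian with mean
`μl - μe` and variance `σl² + σe²`, and standardising it turns the probability of this event
into a value of the Q-function.
-/

open scoped NNReal

lemma gaussQ_eq_toReal_gaussianReal_Ioi (x : ℝ) :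
    gaussQ x = (gaussianReal 0 1 (Ioi x)).toReal := by
  rw [gaussQ, stdNormalCDF, ← compl_Iic, prob_compl_eq_one_sub measurableSet_Iic,
    ENNReal.toReal_sub_of_le prob_le_one ENNReal.one_ne_top, ENNReal.toReal_one]

lemma aemeasurable_of_map_eq_gaussianReal {Ω : Type*} [MeasurableSpace Ω] {P : Measure Ω}
    {X : Ω → ℝ} {m : ℝ} {v : ℝ≥0} (hX : P.map X = gaussianReal m v) : AEMeasurable X P :=
  .of_map_ne_zero (by simp [hX, NeZero.ne])

lemma gaussianReal_Ioi_eq_standard {m : ℝ} {v : ℝ≥0} (hv : v ≠ 0) (a : ℝ) :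
    gaussianReal m v (Ioi a) = gaussianReal 0 1 (Ioi ((a - m) / √v)) := by
  have hsqrt : 0 < √(v : ℝ) := by positivity
  have hstd : (gaussianReal m v).map (fun x ↦ (x - m) / √v) = gaussianReal 0 1 := by
    rw [show (fun x ↦ (x - m) / √v) = (· / √v) ∘ (· - m) from rfl,
      ← Measure.map_map (by fun_prop) (by fun_prop), gaussianReal_map_sub_const,
      gaussianReal_map_div_const, sub_self, zero_div]
    congr
    ext
    simp [Real.sq_sqrt v.coe_nonneg, hv]
  rw [← hstd, Measure.map_apply (by fun_prop) measurableSet_Ioi]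
  congr 1
  ext x
  simp [div_lt_div_iff_of_pos_right hsqrt]

lemma gaussianReal_sub_gaussianReal_of_indepFun {Ω : Type*} [MeasurableSpace Ω] {P : Measure Ω}
    {m₁ m₂ : ℝ} {v₁ v₂ : ℝ≥0} {X Y : Ω → ℝ} (hXY : IndepFun X Y P)
    (hX : P.map X = gaussianReal m₁ v₁) (hY : P.map Y = gaussianReal m₂ v₂) :
    P.map (X - Y) = gaussianReal (m₁ - m₂) (v₁ + v₂) := by
  have hnegY : P.map (-Y) = gaussianReal (-m₂) v₂ := by
    rw [← gaussianReal_map_neg, ← hY,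
      AEMeasurable.map_map_of_aemeasurable measurable_neg.aemeasurable
        (aemeasurable_of_map_eq_gaussianReal hY)]
    rfl
  rw [sub_eq_add_neg, sub_eq_add_neg]
  exact gaussianReal_add_gaussianReal_of_indepFun (hXY.comp measurable_id measurable_neg) hX hnegY

lemma max_logb_one_add_sub_pos_iff {x y : ℝ} (hx : 0 < x) (hy : 0 < y) :
    0 < max (logb 2 (1 + x) - logb 2 (1 + y)) 0 ↔ 0 < log x - log y := by
  rw [lt_max_iff, lt_self_iff_false, or_false, sub_pos, sub_pos,
    logb_lt_logb_iff one_lt_two (by linarith) (by linarith), add_lt_add_iff_left,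
    log_lt_log_iff hy hx]

theorem nonzero_secrecy_capacity_prob_general
    {Ω : Type*} [MeasurableSpace Ω] (P : Measure Ω)
    (X Y : Ω → ℝ)
    (hXpos : ∀ ω, 0 < X ω) (hYpos : ∀ ω, 0 < Y ω)
    (hindep : IndepFun X Y P)
    (μl μe σl σe : ℝ) (hσl : 0 < σl) (hσe : 0 < σe)
    (hlawX : Measure.map (fun ω => Real.log (X ω)) P
      = gaussianReal μl ⟨σl ^ 2, sq_nonneg σl⟩)
    (hlawY : Measure.map (fun ω => Real.log (Y ω)) P
      = gaussianReal μe ⟨σe ^ 2, sq_nonneg σe⟩)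
    (Cs : Ω → ℝ)
    (hCs : ∀ ω, Cs ω = max (Real.logb 2 (1 + X ω) - Real.logb 2 (1 + Y ω)) 0) :
    (P {ω | 0 < Cs ω}).toReal
      = gaussQ ((μe - μl) / Real.sqrt (σl ^ 2 + σe ^ 2)) := by
  set v : ℝ≥0 := ⟨σl ^ 2, sq_nonneg σl⟩ + ⟨σe ^ 2, sq_nonneg σe⟩
  set D : Ω → ℝ := (fun ω ↦ log (X ω)) - fun ω ↦ log (Y ω)
  have hlawD : P.map D = gaussianReal (μl - μe) v :=
    gaussianReal_sub_gaussianReal_of_indepFun (hindep.comp measurable_log measurable_log)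
      hlawX hlawY
  have hevent : {ω | 0 < Cs ω} = D ⁻¹' Ioi 0 := by
    ext ω
    simp only [mem_ofPred_eq, hCs, max_logb_one_add_sub_pos_iff (hXpos ω) (hYpos ω)]
    rfl
  have hv : v ≠ 0 := by
    rw [← NNReal.coe_ne_zero]
    exact (by positivity : (0 : ℝ) < σl ^ 2 + σe ^ 2).ne'
  calc (P {ω | 0 < Cs ω}).toReal = (gaussianReal (μl - μe) v (Ioi 0)).toReal := by
        rw [hevent, ← hlawD, Measure.map_apply₀ (aemeasurable_of_map_eq_gaussianReal hlawD)
          measurableSet_Ioi.nullMeasurableSet]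
    _ = gaussQ ((μe - μl) / √(σl ^ 2 + σe ^ 2)) := by
        rw [gaussianReal_Ioi_eq_standard hv, gaussQ_eq_toReal_gaussianReal_Ioi, zero_sub, neg_sub]
        rfl

/-- If `X` and `Y` are independent positive random variables with `log X ~ N(μl, σl²)` and
`log Y ~ N(μe, σe²)`, and `Cs = max(log₂(1+X) - log₂(1+Y), 0)` is the secrecy capacity,
then the probability of non-zero secrecy capacity is `Q((μe - μl)/√(σl² + σe²))`. -/
theorem nonzero_secrecy_capacity_prob
    {Ω : Type*} [MeasurableSpace Ω] (P : Measure Ω) [IsProbabilityMeasure P]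
    (X Y : Ω → ℝ) (hX : Measurable X) (hY : Measurable Y)
    (hXpos : ∀ ω, 0 < X ω) (hYpos : ∀ ω, 0 < Y ω)
    (hindep : IndepFun X Y P)
    (μl μe σl σe : ℝ) (hσl : 0 < σl) (hσe : 0 < σe)
    (hlawX : Measure.map (fun ω => Real.log (X ω)) P
      = gaussianReal μl ⟨σl ^ 2, sq_nonneg σl⟩)
    (hlawY : Measure.map (fun ω => Real.log (Y ω)) P
      = gaussianReal μe ⟨σe ^ 2, sq_nonneg σe⟩)
    (Cs : Ω → ℝ)
    (hCs : ∀ ω, Cs ω = max (Real.logb 2 (1 + X ω) - Real.logb 2 (1 + Y ω)) 0) :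
    (P {ω | 0 < Cs ω}).toReal
      = gaussQ ((μe - μl) / Real.sqrt (σl ^ 2 + σe ^ 2)) :=
  nonzero_secrecy_capacity_prob_general P X Y hXpos hYpos hindep μl μe σl σe hσl hσe hlawX hlawY Cs
    hCs
end

section
/- Let X and Y be independent positive random variables with log X ~ N(μ_l, σ_l²) and log Y ~ N(μ_e, σ_e²), σ_l, σ_e > 0, let f_e denote the lognormal density of Y, and fix R_s > 0 with ε = 2^{R_s}. Then the secrecy outage probability admits the exact integral representation P[max(log₂(1+X) − log₂(1+Y), 0) < R_s] = ∫₀^∞ f_e(γ) · (1/2)·Erfc((μ_l − log(ε·(1 + γ) − 1))/(√2 σ_l)) dγ. -/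
open MeasureTheory ProbabilityTheory Real Set

/-- The error function `Erf(x) = (2/√π) ∫₀ˣ e^{-t²} dt`. -/
noncomputable def erf (x : ℝ) : ℝ :=
  (2 / Real.sqrt π) * ∫ t in (0:ℝ)..x, Real.exp (-t ^ 2)

/-- The complementary error function `Erfc(x) = 1 - Erf(x)`. -/
noncomputable def erfc (x : ℝ) : ℝ := 1 - erf x

/-- The lognormal density with parameters `(μ, σ²)`. -/
noncomputable def lognormalPDF (μ σ γ : ℝ) : ℝ :=
  (1 / (γ * σ * Real.sqrt (2 * π))) * Real.exp (-(Real.log γ - μ) ^ 2 / (2 * σ ^ 2))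

/-!
The outage event `C_s < R_s` is `X < ε (1 + Y) - 1`. By independence the joint law of `(X, Y)` is
a product, so its probability is the integral over the law of `Y` of the CDF of `X` at
`ε (1 + γ) - 1 > 0`. That CDF is the Gaussian CDF of `log X` at the logarithm, which becomes
`½ Erfc` after writing `N(μ, σ²)` as an affine image of `N(0, ½)`. Finally the law of `Y` is the
push-forward of a Gaussian by `exp`, whose density on `(0, ∞)` is the lognormal `f_e`.
-/

lemma integrable_exp_neg_sq : Integrable fun t : ℝ => exp (-t ^ 2) := by
  simpa using integrable_exp_neg_mul_sq (b := 1) one_pos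

lemma erf_neg (x : ℝ) : erf (-x) = -erf x := by
  have h := intervalIntegral.integral_comp_neg (a := 0) (b := -x) fun t : ℝ => exp (-t ^ 2)
  simp only [neg_sq, neg_neg, neg_zero] at h
  rw [erf, erf, h, intervalIntegral.integral_symm]
  ring

lemma integral_exp_neg_sq_Iic (s : ℝ) :
    ∫ t in Iic s, exp (-t ^ 2) = √π / 2 * (1 + erf s) := by
  have hhalf : ∫ t in Iic (0 : ℝ), exp (-t ^ 2) = √π / 2 := by
    have h := integral_comp_neg_Iic 0 fun t : ℝ => exp (-t ^ 2)
    simp only [neg_sq, neg_zero] at h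
    simpa [h] using integral_gaussian_Ioi 1
  have hsplit := intervalIntegral.integral_Iic_sub_Iic
    integrable_exp_neg_sq.integrableOn integrable_exp_neg_sq.integrableOn (a := 0) (b := s)
  have hpi : √π ≠ 0 := (sqrt_pos.mpr pi_pos).ne'
  rw [erf]
  field_simp
  linarith

lemma gaussianPDFReal_zero_half (u : ℝ) :
    gaussianPDFReal 0 2⁻¹ u = (√π)⁻¹ * exp (-u ^ 2) := by
  simp only [gaussianPDFReal, NNReal.coe_inv, NNReal.coe_ofNat, sub_zero]
  congr 2
  · rw [show (2 : ℝ) * π * 2⁻¹ = π by ring]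
  · field_simp

lemma gaussianReal_zero_half_Iio (s : ℝ) :
    (gaussianReal 0 2⁻¹ (Iio s)).toReal = (1 + erf s) / 2 := by
  rw [gaussianReal_apply_eq_integral _ (by norm_num), ENNReal.toReal_ofReal
    (setIntegral_nonneg measurableSet_Iio fun x _ => gaussianPDFReal_nonneg _ _ x),
    setIntegral_congr_set Iio_ae_eq_Iic]
  simp only [gaussianPDFReal_zero_half]
  rw [integral_const_mul, integral_exp_neg_sq_Iic]
  have hpi : √π ≠ 0 := (sqrt_pos.mpr pi_pos).ne'
  field_simp

-- Variance `1/2` is the one whose density `exp (-u²) / √π` is the integrand of `erf`.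
lemma gaussianReal_eq_map_zero_half (μ σ : ℝ) :
    gaussianReal μ ⟨σ ^ 2, sq_nonneg σ⟩ = (gaussianReal 0 2⁻¹).map (fun u => √2 * σ * u + μ) := by
  have h : (fun u => √2 * σ * u + μ) = (· + μ) ∘ (√2 * σ * ·) := rfl
  rw [h, ← Measure.map_map (by fun_prop) (by fun_prop), gaussianReal_map_const_mul,
    gaussianReal_map_add_const, mul_zero, zero_add]
  congr
  simp only [mul_pow, Nat.ofNat_nonneg, sq_sqrt, NNReal.val_eq_coe, NNReal.coe_mk, NNReal.coe_inv,
    NNReal.coe_ofNat]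
  ring

lemma gaussianReal_Iio_toReal (μ : ℝ) {σ : ℝ} (hσ : 0 < σ) (t : ℝ) :
    (gaussianReal μ ⟨σ ^ 2, sq_nonneg σ⟩ (Iio t)).toReal
      = 1 / 2 * erfc ((μ - t) / (√2 * σ)) := by
  have hc : 0 < √2 * σ := by positivity
  have hpre : (fun u => √2 * σ * u + μ) ⁻¹' Iio t = Iio ((t - μ) / (√2 * σ)) := by
    ext u
    simp only [mem_preimage, mem_Iio, lt_div_iff₀ hc]
    constructor <;> intro h <;> linarith
  rw [gaussianReal_eq_map_zero_half, Measure.map_apply (by fun_prop) measurableSet_Iio, hpre,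
    gaussianReal_zero_half_Iio, erfc, show (t - μ) / (√2 * σ) = -((μ - t) / (√2 * σ)) by ring,
    erf_neg]
  ring

lemma map_eq_map_exp_map_log {Ω : Type*} [MeasurableSpace Ω] {P : Measure Ω} {X : Ω → ℝ}
    (hX : Measurable X) (hpos : ∀ ω, 0 < X ω) :
    P.map X = (P.map fun ω => log (X ω)).map exp := by
  rw [Measure.map_map measurable_exp hX.log]
  congr
  funext ω
  exact (exp_log (hpos ω)).symm

lemma map_exp_apply_Iio (ν : Measure ℝ) {t : ℝ} (ht : 0 < t) :
    ν.map exp (Iio t) = ν (Iio (log t)) := by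
  rw [Measure.map_apply measurable_exp measurableSet_Iio]
  congr
  ext u
  simp [lt_log_iff_exp_lt ht]

lemma exp_mul_lognormalPDF_exp (μ : ℝ) {σ : ℝ} (hσ : 0 < σ) (u : ℝ) :
    exp u * lognormalPDF μ σ (exp u) = gaussianPDFReal μ ⟨σ ^ 2, sq_nonneg σ⟩ u := by
  have hsqrt : √(2 * π * σ ^ 2) = √(2 * π) * σ := by
    rw [sqrt_mul (by positivity), sqrt_sq hσ.le]
  change _ = (√(2 * π * σ ^ 2))⁻¹ * exp (-(u - μ) ^ 2 / (2 * σ ^ 2))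
  rw [lognormalPDF, log_exp, hsqrt]
  have := exp_pos u
  field_simp

lemma integral_comp_exp {E : Type*} [NormedAddCommGroup E] [NormedSpace ℝ E]
    (g : ℝ → E) : ∫ x, exp x • g (exp x) = ∫ y in Ioi 0, g y := by
  rw [← range_exp, ← image_univ, integral_image_eq_integral_abs_deriv_smul MeasurableSet.univ
    (fun x _ => (hasDerivAt_exp x).hasDerivWithinAt) exp_injective.injOn, Measure.restrict_univ]
  simp only [abs_of_pos (exp_pos _)]

lemma integral_map_exp_gaussianReal (μ : ℝ) {σ : ℝ} (hσ : 0 < σ) {f : ℝ → ℝ}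
    (hf : AEStronglyMeasurable f ((gaussianReal μ ⟨σ ^ 2, sq_nonneg σ⟩).map exp)) :
    ∫ y, f y ∂(gaussianReal μ ⟨σ ^ 2, sq_nonneg σ⟩).map exp
      = ∫ γ in Ioi 0, lognormalPDF μ σ γ * f γ := by
  have hv : (⟨σ ^ 2, sq_nonneg σ⟩ : NNReal) ≠ 0 :=
    fun h => (pow_pos hσ 2).ne' (congrArg Subtype.val h)
  rw [integral_map measurable_exp.aemeasurable hf, integral_gaussianReal_eq_integral_smul hv,
    ← integral_comp_exp]
  simp only [smul_eq_mul, ← exp_mul_lognormalPDF_exp μ hσ, mul_assoc]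

lemma measure_lt_comp_eq_lintegral {Ω : Type*} [MeasurableSpace Ω] {P : Measure Ω}
    [IsFiniteMeasure P] {X Y : Ω → ℝ} (hX : Measurable X) (hY : Measurable Y)
    (hXY : IndepFun X Y P) {g : ℝ → ℝ} (hg : Measurable g) :
    P {ω | X ω < g (Y ω)} = ∫⁻ y, P.map X (Iio (g y)) ∂P.map Y := by
  have hS : MeasurableSet {p : ℝ × ℝ | p.1 < g p.2} :=
    measurableSet_lt measurable_fst (hg.comp measurable_snd)
  have hjoint := (indepFun_iff_map_prod_eq_prod_map_map hX.aemeasurable hY.aemeasurable).mp hXY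
  rw [show {ω | X ω < g (Y ω)} = (fun ω => (X ω, Y ω)) ⁻¹' {p | p.1 < g p.2} from rfl,
    ← Measure.map_apply (hX.prodMk hY) hS, hjoint, Measure.prod_apply_symm hS]
  rfl

lemma measurable_measure_Iio (ν : Measure ℝ) : Measurable fun t => ν (Iio t) :=
  Monotone.measurable fun _ _ h => measure_mono (Iio_subset_Iio h)

lemma measure_lt_comp_toReal_eq_integral {Ω : Type*} [MeasurableSpace Ω] {P : Measure Ω}
    [IsFiniteMeasure P] {X Y : Ω → ℝ} (hX : Measurable X) (hY : Measurable Y)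
    (hXY : IndepFun X Y P) {g : ℝ → ℝ} (hg : Measurable g) :
    (P {ω | X ω < g (Y ω)}).toReal = ∫ y, (P.map X (Iio (g y))).toReal ∂P.map Y := by
  rw [measure_lt_comp_eq_lintegral hX hY hXY hg, integral_toReal
    ((measurable_measure_Iio _).fun_comp hg).aemeasurable (ae_of_all _ fun _ => measure_lt_top _ _)]

lemma max_logb_sub_lt_iff {b R x y : ℝ} (hb : 1 < b) (hR : 0 < R) (hx : 0 < x) (hy : 0 < y) :
    max (logb b x - logb b y) 0 < R ↔ x < b ^ R * y := by
  rw [max_lt_iff, and_iff_left hR, sub_lt_iff_lt_add, logb_lt_iff_lt_rpow hb hx,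
    rpow_add (by linarith), rpow_logb (by linarith) hb.ne' hy]

/-- For independent lognormal SIRs `X`, `Y` with `log X ~ N(μl, σl²)`, `log Y ~ N(μe, σe²)`,
lognormal density `f_e` of `Y`, and secrecy rate `Rs > 0` with `ε = 2^{Rs}`, the secrecy
outage probability satisfies
`P[max(log₂(1+X) - log₂(1+Y), 0) < Rs]
  = ∫₀^∞ f_e(γ) · (1/2)·Erfc((μl - log(ε(1+γ) - 1))/(√2 σl)) dγ`. -/
theorem secrecy_outage_prob_integral
    {Ω : Type*} [MeasurableSpace Ω] (P : Measure Ω) [IsProbabilityMeasure P]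
    (X Y : Ω → ℝ) (hX : Measurable X) (hY : Measurable Y)
    (hXpos : ∀ ω, 0 < X ω) (hYpos : ∀ ω, 0 < Y ω)
    (hindep : IndepFun X Y P)
    (μl μe σl σe : ℝ) (hσl : 0 < σl) (hσe : 0 < σe)
    (hlawX : Measure.map (fun ω => Real.log (X ω)) P
      = gaussianReal μl ⟨σl ^ 2, sq_nonneg σl⟩)
    (hlawY : Measure.map (fun ω => Real.log (Y ω)) P
      = gaussianReal μe ⟨σe ^ 2, sq_nonneg σe⟩)
    (Rs : ℝ) (hRs : 0 < Rs) (ε : ℝ) (hε : ε = (2:ℝ) ^ Rs) :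
    (P {ω | max (Real.logb 2 (1 + X ω) - Real.logb 2 (1 + Y ω)) 0 < Rs}).toReal
      = ∫ γ in Set.Ioi (0:ℝ),
          lognormalPDF μe σe γ *
            ((1 / 2) * erfc ((μl - Real.log (ε * (1 + γ) - 1)) / (Real.sqrt 2 * σl))) := by
  subst hε
  have hg : Measurable fun y : ℝ => 2 ^ Rs * (1 + y) - 1 := by fun_prop
  have hset : {ω | max (logb 2 (1 + X ω) - logb 2 (1 + Y ω)) 0 < Rs}
      = {ω | X ω < 2 ^ Rs * (1 + Y ω) - 1} := Set.ext fun ω =>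
    (max_logb_sub_lt_iff one_lt_two hRs (by linarith [hXpos ω]) (by linarith [hYpos ω])).trans
      lt_sub_iff_add_lt'.symm
  rw [hset, measure_lt_comp_toReal_eq_integral hX hY hindep hg, map_eq_map_exp_map_log hX hXpos,
    map_eq_map_exp_map_log hY hYpos, hlawX, hlawY, integral_map_exp_gaussianReal μe hσe
      ((measurable_measure_Iio _).fun_comp hg).ennreal_toReal.aestronglyMeasurable]
  refine setIntegral_congr_fun measurableSet_Ioi fun γ (hγ : 0 < γ) => ?_
  have : 1 < (2 : ℝ) ^ Rs := one_lt_rpow one_lt_two hRs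
  rw [map_exp_apply_Iio _ (by nlinarith), gaussianReal_Iio_toReal μl hσl]
end

section
/- Let m > 0 and θ > 0, and let W be a Gamma-distributed random variable with shape m and rate θ (density f(x) = θ^m x^{m−1} e^{−θx}/Γ(m) for x > 0). Then E[log W] = ψ(m) − log θ, where ψ(m) is the digamma function, i.e., ψ(m) = d/dm log Γ(m), the derivative of the logarithm of the Gamma function evaluated at m. -/
/-!
Differentiating `∫₀^∞ t^(s-1) e^(-θt) dt = θ^(-s) Γ(s)` in `s` under the integral sign (a Mellin
transform, so the derivative is the Mellin transform of `log t · e^(-θt)`) gives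
`∫₀^∞ t^(s-1) log t e^(-θt) dt = θ^(-s) Γ(s) (ψ(s) - log θ)`. Multiplying by `θ^s / Γ(s)` turns the
left side into `E[log W]`.
-/

open MeasureTheory ProbabilityTheory Real Set

noncomputable def digamma (x : ℝ) : ℝ :=
  deriv (fun y => Real.log (Real.Gamma y)) x

open Filter Asymptotics Topology

lemma mellin_ofReal (f : ℝ → ℝ) (x : ℝ) :
    mellin (fun t => (f t : ℂ)) x = ((∫ t in Ioi 0, t ^ (x - 1) * f t : ℝ) : ℂ) := by
  refine (setIntegral_congr_fun measurableSet_Ioi fun t ht => ?_).trans integral_ofReal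
  rw [smul_eq_mul, RCLike.ofReal_mul, ← Complex.ofReal_one, ← Complex.ofReal_sub,
    ← Complex.ofReal_cpow (le_of_lt ht)]
  rfl

lemma hasDerivAt_integral_rpow_mul_exp_neg_mul {θ s : ℝ} (hθ : 0 < θ) (hs : 0 < s) :
    HasDerivAt (fun x => ∫ t in Ioi 0, t ^ (x - 1) * rexp (-(θ * t)))
      (∫ t in Ioi 0, t ^ (s - 1) * (Real.log t * rexp (-(θ * t)))) s := by
  have hcont : Continuous fun t : ℝ => (rexp (-(θ * t)) : ℂ) := by fun_prop
  have htop : (fun t : ℝ => (rexp (-(θ * t)) : ℂ)) =O[atTop] (· ^ (-(s + 1))) := by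
    rw [← isBigO_norm_left]
    simp_rw [Complex.norm_real, isBigO_norm_left]
    simpa only [neg_mul] using (isLittleO_exp_neg_mul_rpow_atTop hθ _).isBigO
  have hbot : (fun t : ℝ => (rexp (-(θ * t)) : ℂ)) =O[𝓝[>] 0] (· ^ (-(0 : ℝ))) := by
    simp_rw [neg_zero, rpow_zero]
    refine isBigO_const_of_tendsto (?_ : Tendsto _ _ (𝓝 (1 : ℂ))) one_ne_zero
    simpa using (hcont.tendsto 0).mono_left nhdsWithin_le_nhds
  simpa only [Complex.real_smul, ← Complex.ofReal_mul, mellin_ofReal, Complex.ofReal_re] using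
    (mellin_hasDerivAt_of_isBigO_rpow (hcont.continuousOn.locallyIntegrableOn measurableSet_Ioi)
      htop (by simp) hbot (by simpa using hs)).2.real_of_complex

lemma hasDerivAt_Gamma_mul_digamma {s : ℝ} (hs : 0 < s) :
    HasDerivAt Gamma (Gamma s * digamma s) s := by
  have hΓ : HasDerivAt Gamma (deriv Gamma s) s :=
    (differentiableAt_Gamma fun n => by linarith [n.cast_nonneg (α := ℝ)]).hasDerivAt
  have hψ : digamma s = deriv Gamma s / Gamma s := (hΓ.log (Gamma_pos_of_pos hs).ne').deriv
  rwa [hψ, mul_div_cancel₀ _ (Gamma_pos_of_pos hs).ne']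

lemma integral_rpow_mul_log_mul_exp_neg_mul_Ioi {θ s : ℝ} (hθ : 0 < θ) (hs : 0 < s) :
    ∫ t in Ioi 0, t ^ (s - 1) * (Real.log t * rexp (-(θ * t)))
      = (1 / θ) ^ s * Gamma s * (digamma s - Real.log θ) := by
  have hclosed : HasDerivAt (fun x => (1 / θ) ^ x * Gamma x)
      ((1 / θ) ^ s * Real.log (1 / θ) * Gamma s + (1 / θ) ^ s * (Gamma s * digamma s)) s :=
    (hasStrictDerivAt_const_rpow (by positivity) s).hasDerivAt.mul (hasDerivAt_Gamma_mul_digamma hs)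
  have hintegral := (hasDerivAt_integral_rpow_mul_exp_neg_mul hθ hs).congr_of_eventuallyEq <| by
    filter_upwards [eventually_gt_nhds hs] with x hx
    exact (integral_rpow_mul_exp_neg_mul_Ioi hx hθ).symm
  rw [hintegral.unique hclosed, one_div, Real.log_inv]
  ring

lemma integral_log_gammaMeasure {m θ : ℝ} (hm : 0 < m) (hθ : 0 < θ) :
    ∫ x, Real.log x ∂gammaMeasure m θ = digamma m - Real.log θ := by
  have hpdf : Measurable (gammaPDF m θ) := (measurable_gammaPDFReal m θ).ennreal_ofReal
  rw [gammaMeasure, integral_withDensity_eq_integral_toReal_smul hpdf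
    (ae_of_all _ fun _ => ENNReal.ofReal_lt_top)]
  have hzero : ∀ x ∉ Ioi (0 : ℝ), (gammaPDF m θ x).toReal • Real.log x = 0 := by
    intro x hx
    rcases (not_lt.mp (mem_Ioi.not.mp hx)).lt_or_eq with hneg | rfl
    · simp [gammaPDF_of_neg hneg]
    · simp
  rw [← setIntegral_eq_integral_of_forall_compl_eq_zero hzero]
  calc ∫ x in Ioi 0, (gammaPDF m θ x).toReal • Real.log x
      = ∫ x in Ioi 0, θ ^ m / Gamma m * (x ^ (m - 1) * (Real.log x * rexp (-(θ * x)))) := by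
        refine setIntegral_congr_fun measurableSet_Ioi fun x hx => ?_
        rw [gammaPDF, ENNReal.toReal_ofReal (gammaPDFReal_nonneg hm hθ x), gammaPDFReal,
          if_pos (le_of_lt hx), smul_eq_mul]
        ring
    _ = digamma m - Real.log θ := by
        rw [integral_const_mul, integral_rpow_mul_log_mul_exp_neg_mul_Ioi hθ hm, one_div,
          inv_rpow hθ.le]
        field_simp [(Gamma_pos_of_pos hm).ne', (rpow_pos_of_pos hθ m).ne']

theorem gamma_expectation_log_general
    {Ω : Type*} [MeasurableSpace Ω] (P : Measure Ω)
    (W : Ω → ℝ) (hW : Measurable W)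
    (m θ : ℝ) (hm : 0 < m) (hθ : 0 < θ)
    (hlaw : Measure.map W P = gammaMeasure m θ) :
    (∫ ω, Real.log (W ω) ∂P) = digamma m - Real.log θ := by
  rw [← integral_log_gammaMeasure hm hθ, ← hlaw,
    integral_map hW.aemeasurable measurable_log.aestronglyMeasurable]

/-- If `W` is Gamma-distributed with shape `m > 0` and rate `θ > 0`, then
`E[log W] = ψ(m) - log θ`, where `ψ` is the digamma function. -/
theorem gamma_expectation_log
    {Ω : Type*} [MeasurableSpace Ω] (P : Measure Ω) [IsProbabilityMeasure P]
    (W : Ω → ℝ) (hW : Measurable W)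
    (m θ : ℝ) (hm : 0 < m) (hθ : 0 < θ)
    (hlaw : Measure.map W P = gammaMeasure m θ) :
    (∫ ω, Real.log (W ω) ∂P) = digamma m - Real.log θ :=
  gamma_expectation_log_general P W hW m θ hm hθ hlaw
end

section
/- Let m > 0 and θ > 0, and let W be a Gamma-distributed random variable with shape m and rate θ (density f(x) = θ^m x^{m−1} e^{−θx}/Γ(m) for x > 0). Then the variance of log W equals the generalized (Hurwitz) zeta value ζ(2, m) = Σ_{n=0}^{∞} 1/(m + n)²; in particular it does not depend on θ. -/
/-!
Write `E_s` for expectation under `Gamma(s, θ)`. Integrating `d/dx (log x ^ k * x ^ s * e^{-θx})`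
over `(0, ∞)` gives `E_{s+1}[log^k] = E_s[log^k] + (k / s) E_s[log^{k-1}]`, hence
`Var_s[log] = s⁻² + Var_{s+1}[log]`. Centring at `log (s / θ)` and using
`log² t ≤ t - 2 + t⁻¹` together with `E_s[W] = s / θ`, `E_s[W⁻¹] = θ / (s - 1)` gives
`Var_s[log] ≤ 1 / (s - 1) → 0`, so the recurrence telescopes to `∑ₙ (s + n)⁻²`.
-/

open MeasureTheory ProbabilityTheory Real Set Filter Topology
open scoped Nat

lemma sq_log_le_sub_add_inv {t : ℝ} (ht : 0 < t) : log t ^ 2 ≤ t - 2 + t⁻¹ := by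
  set y := log t / 2
  have hy : |y| ≤ |sinh y| := by
    rw [abs_sinh]; exact self_le_sinh_iff.mpr (abs_nonneg y)
  have hsinh : (2 * sinh y) ^ 2 = t - 2 + t⁻¹ := by
    have h1 : exp y ^ 2 = t := by rw [← exp_nat_mul]; simp [y, mul_div_cancel₀, exp_log ht]
    rw [sinh_eq, exp_neg]
    field_simp
    rw [← h1]; ring
  calc log t ^ 2 = 4 * y ^ 2 := by ring
    _ ≤ 4 * sinh y ^ 2 := by gcongr 4 * ?_; exact sq_le_sq.mpr hy
    _ = t - 2 + t⁻¹ := by rw [← hsinh]; ring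

lemma abs_log_pow_le {x δ : ℝ} (hx : 0 < x) (hδ : 0 < δ) (k : ℕ) :
    |log x| ^ k ≤ k ! / δ ^ k * (x ^ δ + x ^ (-δ)) := by
  have hexp : exp (δ * |log x|) ≤ x ^ δ + x ^ (-δ) := by
    rw [rpow_def_of_pos hx, rpow_def_of_pos hx]
    rcases le_total 0 (log x) with h | h
    · rw [abs_of_nonneg h, mul_comm]; linarith [exp_pos (log x * -δ)]
    · rw [abs_of_nonpos h, mul_neg, mul_comm, ← mul_neg]; linarith [exp_pos (log x * δ)]
  have := pow_div_factorial_le_exp (x := δ * |log x|) (by positivity) k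
  rw [mul_pow, div_le_iff₀ (by positivity)] at this
  rw [div_mul_eq_mul_div, le_div_iff₀ (by positivity)]
  nlinarith [this]

lemma norm_log_pow_mul_rpow_mul_exp_le {x δ : ℝ} (q θ : ℝ) (hx : 0 < x) (hδ : 0 < δ)
    (k : ℕ) :
    ‖log x ^ k * (x ^ q * exp (-(θ * x)))‖ ≤
      k ! / δ ^ k * ((x ^ (q + δ) + x ^ (q - δ)) * exp (-(θ * x))) := by
  rw [norm_mul, norm_pow, Real.norm_eq_abs, Real.norm_of_nonneg (by positivity)]
  calc |log x| ^ k * (x ^ q * exp (-(θ * x)))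
      ≤ k ! / δ ^ k * (x ^ δ + x ^ (-δ)) * (x ^ q * exp (-(θ * x))) := by
        gcongr; exact abs_log_pow_le hx hδ k
    _ = _ := by rw [rpow_add hx, rpow_sub hx, rpow_neg hx.le]; ring

lemma integrableOn_rpow_mul_exp_neg_mul {q θ : ℝ} (hq : -1 < q) (hθ : 0 < θ) :
    IntegrableOn (fun x => x ^ q * exp (-(θ * x))) (Ioi 0) := by
  simpa using integrableOn_rpow_mul_exp_neg_mul_rpow hq one_pos hθ

lemma integrableOn_log_pow_mul_rpow_mul_exp_neg_mul {q θ : ℝ} (hq : -1 < q) (hθ : 0 < θ)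
    (k : ℕ) : IntegrableOn (fun x => log x ^ k * (x ^ q * exp (-(θ * x)))) (Ioi 0) := by
  set δ := (q + 1) / 2 with hδ_def
  have hδ : 0 < δ := by linarith
  have hdom : IntegrableOn
      (fun x => k ! / δ ^ k * ((x ^ (q + δ) + x ^ (q - δ)) * exp (-(θ * x)))) (Ioi 0) := by
    refine Integrable.const_mul ?_ _
    simp only [add_mul]
    exact (integrableOn_rpow_mul_exp_neg_mul (by linarith [hδ_def]) hθ).add
      (integrableOn_rpow_mul_exp_neg_mul (by linarith [hδ_def]) hθ)
  refine hdom.mono' (by fun_prop) ?_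
  filter_upwards [ae_restrict_mem measurableSet_Ioi] with x hx
  exact norm_log_pow_mul_rpow_mul_exp_le q θ hx hδ k

lemma tendsto_log_pow_mul_rpow_mul_exp_nhdsGT_zero {q : ℝ} (θ : ℝ) (hq : 0 < q) (k : ℕ) :
    Tendsto (fun x => log x ^ k * (x ^ q * exp (-(θ * x)))) (𝓝[>] 0) (𝓝 0) := by
  set δ := q / 2 with hδ_def
  have hδ : 0 < δ := by positivity
  have hbound : Tendsto (fun x => k ! / δ ^ k * ((x ^ (q + δ) + x ^ (q - δ)) * exp (-(θ * x))))
      (𝓝[>] 0) (𝓝 0) := by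
    have hc : ContinuousAt
        (fun x : ℝ => k ! / δ ^ k * ((x ^ (q + δ) + x ^ (q - δ)) * exp (-(θ * x)))) 0 := by
      have h1 := continuousAt_rpow_const 0 (q + δ) (Or.inr (by linarith [hδ_def]))
      have h2 := continuousAt_rpow_const 0 (q - δ) (Or.inr (by linarith [hδ_def]))
      fun_prop
    have := hc.tendsto.mono_left (nhdsWithin_le_nhds (s := Ioi 0))
    rwa [zero_rpow (by linarith [hδ_def]), zero_rpow (by linarith [hδ_def]), add_zero, zero_mul,
      mul_zero] at this
  refine squeeze_zero_norm' ?_ hbound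
  filter_upwards [self_mem_nhdsWithin] with x hx
  exact norm_log_pow_mul_rpow_mul_exp_le q θ hx hδ k

lemma tendsto_log_pow_mul_rpow_mul_exp_atTop (q : ℝ) {θ : ℝ} (hθ : 0 < θ) (k : ℕ) :
    Tendsto (fun x => log x ^ k * (x ^ q * exp (-(θ * x)))) atTop (𝓝 0) := by
  have hbound : Tendsto (fun x => k ! / (1 : ℝ) ^ k *
      ((x ^ (q + 1) + x ^ (q - 1)) * exp (-(θ * x)))) atTop (𝓝 0) := by
    have h1 := tendsto_rpow_mul_exp_neg_mul_atTop_nhds_zero (q + 1) θ hθ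
    have h2 := tendsto_rpow_mul_exp_neg_mul_atTop_nhds_zero (q - 1) θ hθ
    simpa [add_mul] using (h1.add h2).const_mul (k ! : ℝ)
  refine squeeze_zero_norm' ?_ hbound
  filter_upwards [eventually_gt_atTop 0] with x hx
  exact norm_log_pow_mul_rpow_mul_exp_le q θ hx one_pos k

lemma hasDerivAt_log_pow_mul_rpow_mul_exp {x : ℝ} (s θ : ℝ) (hx : 0 < x) (k : ℕ) :
    HasDerivAt (fun x => log x ^ k * (x ^ s * exp (-(θ * x))))
      (k * (log x ^ (k - 1) * (x ^ (s - 1) * exp (-(θ * x))))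
        + s * (log x ^ k * (x ^ (s - 1) * exp (-(θ * x))))
        - θ * (log x ^ k * (x ^ s * exp (-(θ * x))))) x := by
  have hlog := (hasDerivAt_log hx.ne').pow k
  have hrpow := hasDerivAt_rpow_const (p := s) (Or.inl hx.ne')
  have hexp := ((hasDerivAt_id x).const_mul θ).neg.exp
  refine (hlog.mul (hrpow.mul hexp)).congr_deriv ?_
  have hxs : x ^ s = x ^ (s - 1) * x := by rw [← rpow_add_one hx.ne', sub_add_cancel]
  simp only [Pi.pow_apply, Pi.mul_apply, Pi.neg_apply, id, hxs]
  field_simp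
  ring

lemma mul_integral_log_pow_mul_rpow_mul_exp_neg_mul {s θ : ℝ} (hs : 0 < s) (hθ : 0 < θ)
    (k : ℕ) :
    θ * ∫ x in Ioi 0, log x ^ k * (x ^ s * exp (-(θ * x))) =
      k * (∫ x in Ioi 0, log x ^ (k - 1) * (x ^ (s - 1) * exp (-(θ * x))))
        + s * ∫ x in Ioi 0, log x ^ k * (x ^ (s - 1) * exp (-(θ * x))) := by
  have hF0 : log 0 ^ k * ((0 : ℝ) ^ s * exp (-(θ * 0))) = 0 := by simp [zero_rpow hs.ne']
  have hcont : ContinuousWithinAt (fun x => log x ^ k * (x ^ s * exp (-(θ * x)))) (Ici 0) 0 := by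
    rw [← continuousWithinAt_Ioi_iff_Ici, ContinuousWithinAt, hF0]
    exact tendsto_log_pow_mul_rpow_mul_exp_nhdsGT_zero θ hs k
  have hi1 :=
    integrableOn_log_pow_mul_rpow_mul_exp_neg_mul (by linarith : -1 < s - 1) hθ (k - 1)
  have hi2 := integrableOn_log_pow_mul_rpow_mul_exp_neg_mul (by linarith : -1 < s - 1) hθ k
  have hi3 := integrableOn_log_pow_mul_rpow_mul_exp_neg_mul (by linarith : -1 < s) hθ k
  have hi12 : IntegrableOn (fun x => k * (log x ^ (k - 1) * (x ^ (s - 1) * exp (-(θ * x))))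
      + s * (log x ^ k * (x ^ (s - 1) * exp (-(θ * x))))) (Ioi 0) :=
    (hi1.const_mul _).add (hi2.const_mul _)
  have hFTC := integral_Ioi_of_hasDerivAt_of_tendsto hcont
    (fun x hx => hasDerivAt_log_pow_mul_rpow_mul_exp s θ hx k) (hi12.sub (hi3.const_mul _))
    (tendsto_log_pow_mul_rpow_mul_exp_atTop s hθ k)
  rw [integral_sub hi12 (hi3.const_mul _),
    integral_add (hi1.const_mul _) (hi2.const_mul _), integral_const_mul, integral_const_mul,
    integral_const_mul, hF0] at hFTC
  linarith

section GammaMeasure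

variable {s θ : ℝ}

lemma measurable_gammaPDF : Measurable (gammaPDF s θ) :=
  (measurable_gammaPDFReal s θ).ennreal_ofReal

lemma toReal_gammaPDF_smul_eq_indicator (hs : 0 < s) (hθ : 0 < θ) (f : ℝ → ℝ) :
    (fun x => (gammaPDF s θ x).toReal • f x) = (Ici 0).indicator
      (fun x => θ ^ s / Gamma s * (f x * (x ^ (s - 1) * exp (-(θ * x))))) := by
  ext x
  rw [gammaPDF, ENNReal.toReal_ofReal (gammaPDFReal_nonneg hs hθ x), gammaPDFReal, smul_eq_mul]
  by_cases hx : 0 ≤ x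
  · rw [if_pos hx, indicator_of_mem (mem_Ici.mpr hx)]; ring
  · rw [if_neg hx, indicator_of_notMem (by simpa using hx), zero_mul]

lemma integral_gammaMeasure (hs : 0 < s) (hθ : 0 < θ) (f : ℝ → ℝ) :
    ∫ x, f x ∂gammaMeasure s θ =
      θ ^ s / Gamma s * ∫ x in Ioi 0, f x * (x ^ (s - 1) * exp (-(θ * x))) := by
  rw [gammaMeasure, integral_withDensity_eq_integral_toReal_smul
      measurable_gammaPDF (ae_of_all _ fun _ => ENNReal.ofReal_lt_top),
    toReal_gammaPDF_smul_eq_indicator hs hθ, integral_indicator measurableSet_Ici,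
    integral_Ici_eq_integral_Ioi, integral_const_mul]

lemma integrable_gammaMeasure_iff (hs : 0 < s) (hθ : 0 < θ) {f : ℝ → ℝ} :
    Integrable f (gammaMeasure s θ) ↔
      IntegrableOn (fun x => f x * (x ^ (s - 1) * exp (-(θ * x)))) (Ioi 0) := by
  have hc : IsUnit (θ ^ s / Gamma s) :=
    (div_pos (rpow_pos_of_pos hθ s) (Gamma_pos_of_pos hs)).ne'.isUnit
  rw [gammaMeasure, integrable_withDensity_iff_integrable_smul'
      measurable_gammaPDF (ae_of_all _ fun _ => ENNReal.ofReal_lt_top),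
    toReal_gammaPDF_smul_eq_indicator hs hθ, integrable_indicator_iff measurableSet_Ici,
    integrableOn_Ici_iff_integrableOn_Ioi, IntegrableOn, IntegrableOn, integrable_const_mul_iff hc]

lemma ae_pos_gammaMeasure : ∀ᵐ x ∂gammaMeasure s θ, 0 < x := by
  rw [gammaMeasure, ae_withDensity_iff measurable_gammaPDF]
  filter_upwards [volume.ae_ne (0 : ℝ)] with x hx0 hpdf
  by_contra hx
  exact hpdf (gammaPDF_of_neg (lt_of_le_of_ne (not_lt.mp hx) hx0))

lemma rpow_mul_rpow_sub_one_mul_exp_eqOn (q : ℝ) :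
    EqOn (fun x : ℝ => x ^ q * (x ^ (s - 1) * exp (-(θ * x))))
      (fun x => x ^ (s + q - 1) * exp (-(θ * x))) (Ioi 0) := fun x hx => by
  simp only
  rw [← mul_assoc, ← rpow_add hx]; ring_nf

lemma integrable_rpow_gammaMeasure (hs : 0 < s) (hθ : 0 < θ) {q : ℝ} (hq : -s < q) :
    Integrable (fun x => x ^ q) (gammaMeasure s θ) := by
  rw [integrable_gammaMeasure_iff hs hθ]
  exact (integrableOn_rpow_mul_exp_neg_mul (by linarith) hθ).congr_fun
    (rpow_mul_rpow_sub_one_mul_exp_eqOn q).symm measurableSet_Ioi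

lemma integral_rpow_gammaMeasure (hs : 0 < s) (hθ : 0 < θ) {q : ℝ} (hq : -s < q) :
    ∫ x, x ^ q ∂gammaMeasure s θ = Gamma (s + q) / (Gamma s * θ ^ q) := by
  rw [integral_gammaMeasure hs hθ,
    setIntegral_congr_fun measurableSet_Ioi (rpow_mul_rpow_sub_one_mul_exp_eqOn q),
    integral_rpow_mul_exp_neg_mul_Ioi (by linarith) hθ, div_rpow zero_le_one hθ.le, one_rpow,
    rpow_add hθ]
  field_simp

lemma integrable_log_pow_gammaMeasure (hs : 0 < s) (hθ : 0 < θ) (k : ℕ) :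
    Integrable (fun x => log x ^ k) (gammaMeasure s θ) :=
  (integrable_gammaMeasure_iff hs hθ).mpr
    (integrableOn_log_pow_mul_rpow_mul_exp_neg_mul (by linarith) hθ k)

lemma memLp_log_gammaMeasure (hs : 0 < s) (hθ : 0 < θ) : MemLp log 2 (gammaMeasure s θ) :=
  (memLp_two_iff_integrable_sq measurable_log.aestronglyMeasurable).mpr
    (integrable_log_pow_gammaMeasure hs hθ 2)

lemma integral_log_pow_gammaMeasure_add_one (hs : 0 < s) (hθ : 0 < θ) (k : ℕ) :
    ∫ x, log x ^ k ∂gammaMeasure (s + 1) θ = ∫ x, log x ^ k ∂gammaMeasure s θ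
      + k / s * ∫ x, log x ^ (k - 1) ∂gammaMeasure s θ := by
  have hibp := mul_integral_log_pow_mul_rpow_mul_exp_neg_mul hs hθ k
  rw [integral_gammaMeasure (by linarith) hθ, integral_gammaMeasure hs hθ,
    integral_gammaMeasure hs hθ, add_sub_cancel_right, Gamma_add_one hs.ne', rpow_add_one hθ.ne',
    mul_div_right_comm, mul_assoc, hibp]
  have := (Gamma_pos_of_pos hs).ne'
  field_simp
  ring

lemma variance_log_gammaMeasure_eq_add_one (hs : 0 < s) (hθ : 0 < θ) :
    Var[log; gammaMeasure s θ] = 1 / s ^ 2 + Var[log; gammaMeasure (s + 1) θ] := by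
  have := isProbabilityMeasure_gammaMeasure hs hθ
  have := isProbabilityMeasure_gammaMeasure (by linarith : 0 < s + 1) hθ
  have h1 := integral_log_pow_gammaMeasure_add_one hs hθ 1
  have h2 := integral_log_pow_gammaMeasure_add_one hs hθ 2
  simp only [pow_one, pow_zero, integral_const, probReal_univ, smul_eq_mul, mul_one,
    Nat.cast_one, Nat.cast_ofNat, Nat.add_one_sub_one, Nat.sub_self] at h1 h2
  rw [variance_eq_sub (memLp_log_gammaMeasure hs hθ),
    variance_eq_sub (memLp_log_gammaMeasure (by linarith) hθ)]
  simp only [Pi.pow_apply]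
  rw [h1, h2]
  field_simp
  ring

lemma variance_log_gammaMeasure_le (hs : 1 < s) (hθ : 0 < θ) :
    Var[log; gammaMeasure s θ] ≤ 1 / (s - 1) := by
  have hs0 : 0 < s := by linarith
  have := isProbabilityMeasure_gammaMeasure hs0 hθ
  set c := log (s / θ) with hc
  have hpt : ∀ x, 0 < x →
      (log x - c) ^ 2 ≤ θ / s * x ^ (1 : ℝ) - 2 + s / θ * x ^ (-1 : ℝ) := by
    intro x hx
    have h := sq_log_le_sub_add_inv (by positivity : 0 < θ * x / s)
    rw [rpow_one, rpow_neg_one]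
    convert h using 1
    · rw [hc, log_div (by positivity) hs0.ne', log_mul hθ.ne' hx.ne', log_div hs0.ne' hθ.ne']
      ring
    · field_simp
  have hint1 := integrable_rpow_gammaMeasure hs0 hθ (by linarith : -s < 1)
  have hint2 := integrable_rpow_gammaMeasure hs0 hθ (by linarith : -s < -1)
  have hint12 : Integrable (fun x => θ / s * x ^ (1 : ℝ) - 2) (gammaMeasure s θ) :=
    (hint1.const_mul _).sub (integrable_const _)
  calc Var[log; gammaMeasure s θ] = Var[fun x => log x - c; gammaMeasure s θ] :=
        (variance_sub_const measurable_log.aestronglyMeasurable c).symm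
    _ ≤ ∫ x, (log x - c) ^ 2 ∂gammaMeasure s θ :=
        variance_le_expectation_sq (by fun_prop)
    _ ≤ ∫ x, θ / s * x ^ (1 : ℝ) - 2 + s / θ * x ^ (-1 : ℝ) ∂gammaMeasure s θ := by
        refine integral_mono_ae ?_ (hint12.add (hint2.const_mul _))
          (ae_pos_gammaMeasure.mono hpt)
        exact ((memLp_log_gammaMeasure hs0 hθ).sub (memLp_const c)).integrable_sq
    _ = 1 / (s - 1) := by
        rw [integral_add hint12 (hint2.const_mul _),
          integral_sub (hint1.const_mul _) (integrable_const _), integral_const_mul,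
          integral_const_mul, integral_rpow_gammaMeasure hs0 hθ (by linarith),
          integral_rpow_gammaMeasure hs0 hθ (by linarith), integral_const, probReal_univ,
          one_smul, Gamma_add_one hs0.ne', rpow_one, rpow_neg_one]
        have hs1 : s - 1 ≠ 0 := (sub_pos.mpr hs).ne'
        have hΓ : Gamma s = (s - 1) * Gamma (s - 1) := by simpa using Gamma_add_one hs1
        have := (Gamma_pos_of_pos (sub_pos.mpr hs)).ne'
        rw [← sub_eq_add_neg, hΓ]
        field_simp
        ring

end GammaMeasure

lemma hasSum_of_eq_add_of_tendsto_zero {a f : ℕ → ℝ} (ha : ∀ n, 0 ≤ a n)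
    (hf : ∀ n, f n = a n + f (n + 1)) (hlim : Tendsto f atTop (𝓝 0)) : HasSum a (f 0) := by
  refine (hasSum_iff_tendsto_nat_of_nonneg ha _).mpr ?_
  have hpartial : ∀ N, ∑ i ∈ Finset.range N, a i = f 0 - f N := fun N => by
    rw [← Finset.sum_range_sub' f N]
    exact Finset.sum_congr rfl fun i _ => by linarith [hf i]
  simp only [hpartial]
  simpa using tendsto_const_nhds.sub hlim

lemma hasSum_variance_log_gammaMeasure {s θ : ℝ} (hs : 0 < s) (hθ : 0 < θ) :
    HasSum (fun n : ℕ => 1 / (s + n) ^ 2) Var[log; gammaMeasure s θ] := by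
  have hrec : ∀ n : ℕ, Var[log; gammaMeasure (s + n) θ] =
      1 / (s + n) ^ 2 + Var[log; gammaMeasure (s + (n + 1 : ℕ)) θ] := fun n => by
    rw [Nat.cast_succ, ← add_assoc]
    exact variance_log_gammaMeasure_eq_add_one (by positivity) hθ
  have hbound : Tendsto (fun n : ℕ => 1 / (s - 1 + n)) atTop (𝓝 0) :=
    tendsto_const_nhds.div_atTop (tendsto_atTop_add_const_left _ _ tendsto_natCast_atTop_atTop)
  have hlim : Tendsto (fun n : ℕ => Var[log; gammaMeasure (s + n) θ]) atTop (𝓝 0) := by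
    refine squeeze_zero' (.of_forall fun n => variance_nonneg _ _) ?_ hbound
    filter_upwards [eventually_ge_atTop 1] with n hn
    have hn' : (1 : ℝ) ≤ n := by exact_mod_cast hn
    convert variance_log_gammaMeasure_le (by linarith : 1 < s + n) hθ using 2
    ring
  simpa using hasSum_of_eq_add_of_tendsto_zero (fun n => by positivity) hrec hlim

theorem gamma_variance_log_general
    {Ω : Type*} [MeasurableSpace Ω] (P : Measure Ω)
    (W : Ω → ℝ) (hW : Measurable W)
    (m θ : ℝ) (hm : 0 < m) (hθ : 0 < θ)
    (hlaw : Measure.map W P = gammaMeasure m θ) :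
    variance (fun ω => Real.log (W ω)) P = ∑' n : ℕ, 1 / (m + n) ^ 2 := by
  have hW' : MeasurePreserving W P (gammaMeasure m θ) := ⟨hW, hlaw⟩
  rw [hW'.variance_fun_comp measurable_log.aemeasurable]
  exact (hasSum_variance_log_gammaMeasure hm hθ).tsum_eq.symm

/-- If `W` is Gamma-distributed with shape `m > 0` and rate `θ > 0`, then the variance of
`log W` equals the Hurwitz zeta value `ζ(2, m) = ∑_{n=0}^∞ 1/(m+n)²`; in particular it does
not depend on `θ`. -/
theorem gamma_variance_log
    {Ω : Type*} [MeasurableSpace Ω] (P : Measure Ω) [IsProbabilityMeasure P]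
    (W : Ω → ℝ) (hW : Measurable W)
    (m θ : ℝ) (hm : 0 < m) (hθ : 0 < θ)
    (hlaw : Measure.map W P = gammaMeasure m θ) :
    variance (fun ω => Real.log (W ω)) P = ∑' n : ℕ, 1 / (m + n) ^ 2 :=
  gamma_variance_log_general P W hW m θ hm hθ hlaw
end
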